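/- arXiv:1811.09044 — 6 statements merged into one kernel-verified Lean document; each statement's English description precedes it below -/
import Mathlib

section
/- Under the assumptions on ω, the map x ↦ (𝒥ρ)(x) is Lipschitz on [a,b] with |∂_x (𝒥ρ)(x)| ≤ ℒ ‖ρ‖_{L¹(]a,b[)}, where ℒ = ‖ω′‖_{L∞}/K_ω + ‖ω‖_{L∞}‖ω′‖_{L¹}/K_ω². -/
/-!
Differentiate under the integral sign, `∂ₓ ∫ ρ(y) ω(y - x) dy = -∫ ρ(y) ω'(y - x) dy`, and
apply the quotient rule to `𝒥ρ = N / W`. Then `|N| ≤ ‖ω‖_∞ ‖ρ‖_{L¹}`, `|N'| ≤ ‖ω'‖_∞ ‖ρ‖_{L¹}`,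
`|W'| ≤ ‖ω'‖_{L¹}` because `W'(x)` integrates a translate of `ω'`, and `W ≥ K_ω`; the mean value
inequality on `[a, b]` turns the derivative bound into the Lipschitz bound.
-/

open MeasureTheory

section IntervalConvolution

variable {a b : ℝ} {ρ ω : ℝ → ℝ}

theorem hasDerivAt_intervalIntegral_mul_comp_sub {M' : ℝ} (hρ : IntervalIntegrable ρ volume a b)
    (hω : Differentiable ℝ ω) (hω' : ∀ y, |deriv ω y| ≤ M') (x : ℝ) :
    HasDerivAt (fun x => ∫ y in a..b, ρ y * ω (y - x))
      (-∫ y in a..b, ρ y * deriv ω (y - x)) x := by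
  have hρm := hρ.def'.aestronglyMeasurable
  have hasDeriv := intervalIntegral.hasDerivAt_integral_of_dominated_loc_of_deriv_le
    (F := fun x y => ρ y * ω (y - x)) (F' := fun x y => -(ρ y * deriv ω (y - x)))
    (bound := fun y => |ρ y| * M') (x₀ := x) Filter.univ_mem
    (Filter.Eventually.of_forall fun x' =>
      hρm.mul (hω.continuous.comp (continuous_sub_right x')).aestronglyMeasurable)
    (hρ.mul_continuousOn (hω.continuous.comp (continuous_sub_right x)).continuousOn)
    (hρm.mul ((measurable_deriv ω).comp (measurable_sub_const x)).aestronglyMeasurable).neg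
    (Filter.Eventually.of_forall fun y _ x' _ => by
      simpa only [norm_neg, norm_mul, Real.norm_eq_abs]
        using mul_le_mul_of_nonneg_left (hω' (y - x')) (abs_nonneg (ρ y)))
    (hρ.abs.mul_const M')
    (Filter.Eventually.of_forall fun y _ x' _ => by
      simpa using
        ((hω (y - x')).hasDerivAt.comp x' ((hasDerivAt_id x').const_sub y)).const_mul (ρ y))
  simpa only [intervalIntegral.integral_neg] using hasDeriv.2

theorem abs_intervalIntegral_mul_le {g : ℝ → ℝ} {M : ℝ} (hab : a ≤ b)
    (hρ : IntervalIntegrable ρ volume a b) (hg : ∀ y, |g y| ≤ M) :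
    |∫ y in a..b, ρ y * g y| ≤ M * ∫ y in a..b, |ρ y| := by
  rw [← intervalIntegral.integral_const_mul]
  refine intervalIntegral.norm_integral_le_of_norm_le (f := fun y => ρ y * g y) hab
    (Filter.Eventually.of_forall fun y _ => ?_) (hρ.abs.const_mul M)
  rw [Real.norm_eq_abs, abs_mul, mul_comm]
  exact mul_le_mul_of_nonneg_right (hg y) (abs_nonneg _)

theorem abs_intervalIntegral_comp_sub_le (hω : Integrable ω) (x : ℝ) :
    |∫ y in a..b, ω (y - x)| ≤ ∫ y, |ω y| := by
  rw [intervalIntegral.integral_comp_sub_right (fun t => ω t) x]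
  exact intervalIntegral.norm_integral_le_integral_norm_uIoc.trans
    (setIntegral_le_integral hω.norm (Filter.Eventually.of_forall fun _ => norm_nonneg _))

end IntervalConvolution

theorem abs_quotient_rule_le {n n' w w' A B C K : ℝ} (hK : 0 < K) (hw : K ≤ w)
    (hn' : |n'| ≤ A) (hn : |n| ≤ B) (hw' : |w'| ≤ C) :
    |(n' * w - n * w') / w ^ 2| ≤ A / K + B * C / K ^ 2 := by
  have hw₀ : 0 < w := hK.trans_le hw
  have hA : 0 ≤ A := (abs_nonneg _).trans hn'
  have hB : 0 ≤ B := (abs_nonneg _).trans hn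
  have hC : 0 ≤ C := (abs_nonneg _).trans hw'
  calc |(n' * w - n * w') / w ^ 2| = |n' / w - n * w' / w ^ 2| := by
        rw [sub_div, sq, ← div_div, mul_div_cancel_right₀ _ hw₀.ne']
    _ ≤ |n'| / w + |n| * |w'| / w ^ 2 := by
        grw [abs_sub, abs_div, abs_div, abs_mul, abs_of_pos hw₀, abs_of_pos (pow_pos hw₀ 2)]
    _ ≤ A / K + B * C / K ^ 2 := by gcongr

theorem stmt1_general
    (a b Kω Mω Mω' : ℝ) (hKω : 0 < Kω)
    (ω : ℝ → ℝ) (hω : ContDiff ℝ 2 ω)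
    (hω'int : Integrable (deriv ω))
    (hωbd : ∀ y, |ω y| ≤ Mω)
    (hω'bd : ∀ y, |deriv ω y| ≤ Mω')
    (W : ℝ → ℝ) (hW : ∀ x, W x = ∫ y in a..b, ω (y - x))
    (hWlb : ∀ x ∈ Set.Icc a b, Kω ≤ W x)
    (ρ : ℝ → ℝ) (hρ : IntervalIntegrable ρ volume a b)
    (J : ℝ → ℝ) (hJ : ∀ x, J x = (∫ y in a..b, ρ y * ω (y - x)) / W x) :
    (∀ x ∈ Set.Icc a b,
        |deriv J x| ≤
          (Mω' / Kω + Mω * (∫ y, |deriv ω y|) / Kω ^ 2) * ∫ y in a..b, |ρ y|) ∧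
    (∀ x ∈ Set.Icc a b, ∀ x' ∈ Set.Icc a b,
        |J x - J x'| ≤
          (Mω' / Kω + Mω * (∫ y, |deriv ω y|) / Kω ^ 2) * (∫ y in a..b, |ρ y|) *
            |x - x'|) := by
  have hω₁ : Differentiable ℝ ω := hω.differentiable (by norm_num)
  have hWd (x : ℝ) : HasDerivAt W (-∫ y in a..b, deriv ω (y - x)) x := by
    rw [funext hW]
    simpa only [one_mul] using hasDerivAt_intervalIntegral_mul_comp_sub (ρ := fun _ => 1)
      intervalIntegrable_const hω₁ hω'bd x
  have hJd : ∀ x ∈ Set.Icc a b, ∃ J', HasDerivAt J J' x ∧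
      |J'| ≤ (Mω' / Kω + Mω * (∫ y, |deriv ω y|) / Kω ^ 2) * ∫ y in a..b, |ρ y| := by
    intro x hx
    have hab : a ≤ b := hx.1.trans hx.2
    rw [funext hJ]
    refine ⟨_, (hasDerivAt_intervalIntegral_mul_comp_sub hρ hω₁ hω'bd x).div (hWd x)
      (hKω.trans_le (hWlb x hx)).ne', ?_⟩
    calc _ ≤ Mω' * (∫ y in a..b, |ρ y|) / Kω
          + Mω * (∫ y in a..b, |ρ y|) * (∫ y, |deriv ω y|) / Kω ^ 2 :=
          abs_quotient_rule_le hKω (hWlb x hx)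
            ((abs_neg _).trans_le <| abs_intervalIntegral_mul_le (g := fun y => deriv ω (y - x))
              hab hρ fun y => hω'bd (y - x))
            (abs_intervalIntegral_mul_le (g := fun y => ω (y - x)) hab hρ fun y => hωbd (y - x))
            ((abs_neg _).trans_le <| abs_intervalIntegral_comp_sub_le hω'int x)
      _ = _ := by ring
  refine ⟨fun x hx => ?_, fun x hx x' hx' => ?_⟩
  · obtain ⟨J', hJ', hbound⟩ := hJd x hx
    rwa [hJ'.deriv]
  · choose! J' hJ' hbound using hJd
    simpa only [Real.norm_eq_abs] using
      (convex_Icc a b).norm_image_sub_le_of_norm_hasDerivWithin_le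
        (fun z hz => (hJ' z hz).hasDerivWithinAt) hbound hx' hx

theorem stmt1
    (a b Kω Mω Mω' : ℝ) (hab : a < b) (hKω : 0 < Kω)
    (ω : ℝ → ℝ) (hω : ContDiff ℝ 2 ω)
    (hωint : Integrable ω) (hω'int : Integrable (deriv ω))
    (hωbd : ∀ y, |ω y| ≤ Mω)
    (hω'bd : ∀ y, |deriv ω y| ≤ Mω')
    (W : ℝ → ℝ) (hW : ∀ x, W x = ∫ y in a..b, ω (y - x))
    (hWlb : ∀ x ∈ Set.Icc a b, Kω ≤ W x)
    (ρ : ℝ → ℝ) (hρ : IntervalIntegrable ρ volume a b)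
    (J : ℝ → ℝ) (hJ : ∀ x, J x = (∫ y in a..b, ρ y * ω (y - x)) / W x) :
    (∀ x ∈ Set.Icc a b,
        |deriv J x| ≤
          (Mω' / Kω + Mω * (∫ y, |deriv ω y|) / Kω ^ 2) * ∫ y in a..b, |ρ y|) ∧
    (∀ x ∈ Set.Icc a b, ∀ x' ∈ Set.Icc a b,
        |J x - J x'| ≤
          (Mω' / Kω + Mω * (∫ y, |deriv ω y|) / Kω ^ 2) * (∫ y in a..b, |ρ y|) *
            |x - x'|) :=
  stmt1_general a b Kω Mω Mω' hKω ω hω hω'int hωbd hω'bd W hW hWlb ρ hρ J hJ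
end

section
/- For two densities ρ, σ ∈ L¹(]a,b[), the derivatives of the non-local terms satisfy |∂_x(𝒥ρ)(x) − ∂_x(𝒥σ)(x)| ≤ ℒ ∫_a^b |ρ(y) − σ(y)| dy for all x ∈ [a,b], with ℒ = ‖ω′‖_{L∞}/K_ω + ‖ω‖_{L∞}‖ω′‖_{L¹}/K_ω². -/
/-! Write `𝒥u = N u / W` with `N u (x) = ∫ u(y) ω(y - x) dy`, so that `W = N 1`. Differentiating
under the integral sign, `(𝒥u)' = (N u)'/W - N u · W'/W²`, which is linear in `u`. The bounds
`|(N u)'| ≤ ‖ω'‖∞ ‖u‖₁`, `|N u| ≤ ‖ω‖∞ ‖u‖₁`, `|W'| ≤ ‖ω'‖₁` and `W ≥ K_ω`, applied to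
`u = ρ - σ`, give the estimate. -/

open MeasureTheory Real intervalIntegral

lemma abs_quotient_deriv_le {n n' w w' K A B C : ℝ} (hK : 0 < K) (hw : K ≤ w)
    (hn' : |n'| ≤ A) (hn : |n| ≤ B) (hw' : |w'| ≤ C) :
    |(n' * w - n * w') / w ^ 2| ≤ A / K + B * C / K ^ 2 := by
  have hw0 : 0 < w := hK.trans_le hw
  have hsplit : (n' * w - n * w') / w ^ 2 = n' / w - n * w' / w ^ 2 := by
    field_simp
  rw [hsplit]
  calc |n' / w - n * w' / w ^ 2| ≤ |n' / w| + |n * w' / w ^ 2| := abs_sub _ _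
    _ ≤ A / K + B * C / K ^ 2 := by
      have hB : 0 ≤ B := (abs_nonneg _).trans hn
      have hC : 0 ≤ C := (abs_nonneg _).trans hw'
      rw [abs_div, abs_div, abs_mul, abs_of_pos hw0, abs_of_pos (pow_pos hw0 2)]
      gcongr
      · exact (abs_nonneg _).trans hn'

noncomputable def nonlocalAverage (ω : ℝ → ℝ) (a b : ℝ) (u : ℝ → ℝ) (x : ℝ) : ℝ :=
  (∫ y in a..b, u y * ω (y - x)) / ∫ y in a..b, ω (y - x)

section

variable {ω u v : ℝ → ℝ} {a b M' : ℝ}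

lemma intervalIntegrable_mul_comp_sub (hω : Continuous ω) (hu : IntervalIntegrable u volume a b)
    (x : ℝ) : IntervalIntegrable (fun y => u y * ω (y - x)) volume a b :=
  hu.mul_continuousOn (hω.comp (continuous_sub_right x)).continuousOn

lemma nonlocalAverage_sub (hω : Continuous ω) (hu : IntervalIntegrable u volume a b)
    (hv : IntervalIntegrable v volume a b) :
    nonlocalAverage ω a b (fun y => u y - v y) =
      nonlocalAverage ω a b u - nonlocalAverage ω a b v := by
  ext x
  simp only [nonlocalAverage, Pi.sub_apply, sub_mul, ← sub_div]
  rw [integral_sub (intervalIntegrable_mul_comp_sub hω hu x)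
    (intervalIntegrable_mul_comp_sub hω hv x)]

lemma hasDerivAt_integral_mul_comp_sub (hω : ContDiff ℝ 1 ω)
    (hω' : ∀ y, |deriv ω y| ≤ M') (hu : IntervalIntegrable u volume a b) (x₀ : ℝ) :
    HasDerivAt (fun x => ∫ y in a..b, u y * ω (y - x))
      (-∫ y in a..b, u y * deriv ω (y - x₀)) x₀ := by
  have hω'c : Continuous (deriv ω) := hω.continuous_deriv le_rfl
  have hmeas : AEStronglyMeasurable u (volume.restrict (Set.uIoc a b)) :=
    (intervalIntegrable_iff.mp hu).aestronglyMeasurable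
  have hderiv : ∀ t x, HasDerivAt (fun x => u t * ω (t - x)) (u t * -deriv ω (t - x)) x :=
    fun t x => by
      simpa using (((hω.differentiable one_ne_zero (t - x)).hasDerivAt.comp x
        ((hasDerivAt_id x).const_sub t)).const_mul (u t))
  have hdom := hasDerivAt_integral_of_dominated_loc_of_deriv_le (x₀ := x₀)
    (F' := fun x t => u t * -deriv ω (t - x)) (bound := fun t => |u t| * M')
    Filter.univ_mem
    (.of_forall fun x => (intervalIntegrable_mul_comp_sub hω.continuous hu x).def'.1)
    (intervalIntegrable_mul_comp_sub hω.continuous hu x₀)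
    (hmeas.mul (hω'c.comp (continuous_sub_right x₀)).neg.aestronglyMeasurable)
    (.of_forall fun t _ x _ => by
      rw [norm_mul, norm_neg, Real.norm_eq_abs, Real.norm_eq_abs]
      exact mul_le_mul_of_nonneg_left (hω' _) (abs_nonneg _))
    (hu.abs.mul_const M') (.of_forall fun t _ x _ => hderiv t x)
  simpa only [mul_neg, intervalIntegral.integral_neg] using hdom.2

lemma abs_integral_mul_le {g : ℝ → ℝ} {M : ℝ} (hab : a ≤ b)
    (hu : IntervalIntegrable u volume a b) (hg : ∀ y, |g y| ≤ M) :
    |∫ y in a..b, u y * g y| ≤ M * ∫ y in a..b, |u y| := by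
  rw [← intervalIntegral.integral_const_mul, ← Real.norm_eq_abs]
  refine norm_integral_le_of_norm_le hab (.of_forall fun y _ => ?_) (hu.abs.const_mul M)
  rw [Real.norm_eq_abs, abs_mul, mul_comm]
  exact mul_le_mul_of_nonneg_right (hg y) (abs_nonneg _)

lemma integral_abs_comp_sub_le_integral_abs {f : ℝ → ℝ} (hab : a ≤ b) (hf : Integrable f)
    (x : ℝ) :
    ∫ y in a..b, |f (y - x)| ≤ ∫ y, |f y| := by
  rw [integral_comp_sub_right (fun y => |f y|), integral_of_le (by linarith)]
  exact setIntegral_le_integral hf.abs (.of_forall fun y => abs_nonneg _)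

lemma hasDerivAt_nonlocalAverage (hω : ContDiff ℝ 1 ω) (hω' : ∀ y, |deriv ω y| ≤ M')
    (hu : IntervalIntegrable u volume a b) {x₀ : ℝ} (hW : ∫ y in a..b, ω (y - x₀) ≠ 0) :
    HasDerivAt (nonlocalAverage ω a b u)
      (((-∫ y in a..b, u y * deriv ω (y - x₀)) * (∫ y in a..b, ω (y - x₀)) -
        (∫ y in a..b, u y * ω (y - x₀)) * -∫ y in a..b, deriv ω (y - x₀)) /
          (∫ y in a..b, ω (y - x₀)) ^ 2) x₀ := by
  have hW' := hasDerivAt_integral_mul_comp_sub hω hω' (u := fun _ => 1)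
    (intervalIntegrable_const (a := a) (b := b)) x₀
  simp only [one_mul] at hW'
  exact (hasDerivAt_integral_mul_comp_sub hω hω' hu x₀).div hW' hW

lemma abs_deriv_nonlocalAverage_le {K M : ℝ} (hab : a ≤ b) (hω : ContDiff ℝ 1 ω)
    (hω'int : Integrable (deriv ω)) (hωbd : ∀ y, |ω y| ≤ M) (hω' : ∀ y, |deriv ω y| ≤ M')
    (hu : IntervalIntegrable u volume a b) (hK : 0 < K) {x₀ : ℝ}
    (hW : K ≤ ∫ y in a..b, ω (y - x₀)) :
    |deriv (nonlocalAverage ω a b u) x₀| ≤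
      (M' / K + M * (∫ y, |deriv ω y|) / K ^ 2) * ∫ y in a..b, |u y| := by
  rw [(hasDerivAt_nonlocalAverage hω hω' hu (hK.trans_le hW).ne').deriv]
  refine (abs_quotient_deriv_le (A := M' * ∫ y in a..b, |u y|) (C := ∫ y, |deriv ω y|) hK hW ?_
    (abs_integral_mul_le hab hu fun y => hωbd (y - x₀)) ?_).trans_eq (by ring)
  · rw [abs_neg]
    exact abs_integral_mul_le hab hu fun y => hω' (y - x₀)
  · rw [abs_neg]
    exact (abs_integral_le_integral_abs hab).trans
      (integral_abs_comp_sub_le_integral_abs hab hω'int x₀)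

end

theorem stmt4_general
    (a b Kω Mω Mω' : ℝ) (hKω : 0 < Kω)
    (ω : ℝ → ℝ) (hω : ContDiff ℝ 1 ω)
    (hω'int : Integrable (deriv ω))
    (hωbd : ∀ y, |ω y| ≤ Mω)
    (hω'bd : ∀ y, |deriv ω y| ≤ Mω')
    (W : ℝ → ℝ) (hW : ∀ x, W x = ∫ y in a..b, ω (y - x))
    (hWlb : ∀ x ∈ Set.Icc a b, Kω ≤ W x)
    (ρ σ : ℝ → ℝ)
    (hρ : IntervalIntegrable ρ volume a b) (hσ : IntervalIntegrable σ volume a b)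
    (J : (ℝ → ℝ) → ℝ → ℝ)
    (hJ : ∀ u x, J u x = (∫ y in a..b, u y * ω (y - x)) / W x) :
    ∀ x ∈ Set.Icc a b,
      |deriv (J ρ) x - deriv (J σ) x| ≤
        (Mω' / Kω + Mω * (∫ y, |deriv ω y|) / Kω ^ 2) *
          ∫ y in a..b, |ρ y - σ y| := by
  intro x hx
  have hJ_eq : J = nonlocalAverage ω a b := by
    ext u y
    rw [hJ, hW, nonlocalAverage]
  subst hJ_eq
  have hWx : Kω ≤ ∫ y in a..b, ω (y - x) := hW x ▸ hWlb x hx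
  have hW0 : ∫ y in a..b, ω (y - x) ≠ 0 := (hKω.trans_le hWx).ne'
  rw [← deriv_sub (hasDerivAt_nonlocalAverage hω hω'bd hρ hW0).differentiableAt
    (hasDerivAt_nonlocalAverage hω hω'bd hσ hW0).differentiableAt,
    ← nonlocalAverage_sub hω.continuous hρ hσ]
  exact abs_deriv_nonlocalAverage_le (hx.1.trans hx.2) hω hω'int hωbd hω'bd (hρ.sub hσ) hKω hWx

theorem stmt4
    (a b Kω Mω Mω' : ℝ) (hab : a < b) (hKω : 0 < Kω)
    (ω : ℝ → ℝ) (hω : ContDiff ℝ 1 ω)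
    (hωint : Integrable ω) (hω'int : Integrable (deriv ω))
    (hωbd : ∀ y, |ω y| ≤ Mω)
    (hω'bd : ∀ y, |deriv ω y| ≤ Mω')
    (W : ℝ → ℝ) (hW : ∀ x, W x = ∫ y in a..b, ω (y - x))
    (hWlb : ∀ x ∈ Set.Icc a b, Kω ≤ W x)
    (ρ σ : ℝ → ℝ)
    (hρ : IntervalIntegrable ρ volume a b) (hσ : IntervalIntegrable σ volume a b)
    (J : (ℝ → ℝ) → ℝ → ℝ)
    (hJ : ∀ u x, J u x = (∫ y in a..b, u y * ω (y - x)) / W x) :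
    ∀ x ∈ Set.Icc a b,
      |deriv (J ρ) x - deriv (J σ) x| ≤
        (Mω' / Kω + Mω * (∫ y, |deriv ω y|) / Kω ^ 2) *
          ∫ y in a..b, |ρ y - σ y| :=
  stmt4_general a b Kω Mω Mω' hKω ω hω hω'int hωbd hω'bd W hW hWlb ρ σ hρ hσ J hJ
end

section
/- Under the hypotheses |∂_ρ f| ≤ L, f(t,x,0,R) = 0, |∂_x f| ≤ C|ρ| and the CFL condition α ≥ L, λ ≤ (1/3) min{1/α, 1/(2L + CΔx)}, one step of the adapted Lax–Friedrichs scheme preserves nonnegativity: if ρ^n_j ≥ 0 for all j = 0, …, N+1, then ρ^{n+1}_j = ρ^n_j − λ(F^n_{j+1/2}(ρ^n_j, ρ^n_{j+1}) − F^n_{j−1/2}(ρ^n_{j−1}, ρ^n_j)) ≥ 0 for j = 1, …, N. -/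
theorem stmt8
    (L C α lam Δx Δt tn : ℝ) (N : ℕ)
    (hΔx : 0 < Δx) (hΔt : 0 < Δt) (hlam : lam = Δt / Δx)
    (f : ℝ → ℝ → ℝ → ℝ → ℝ)
    (hf0 : ∀ t x R, f t x 0 R = 0)
    (hfρ : ∀ t x R, Differentiable ℝ (fun ρ => f t x ρ R))
    (hfρL : ∀ t x ρ R, |deriv (fun ρ => f t x ρ R) ρ| ≤ L)
    (hfx : ∀ t ρ R, Differentiable ℝ (fun x => f t x ρ R))
    (hfxC : ∀ t x ρ R, |deriv (fun x => f t x ρ R) x| ≤ C * |ρ|)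
    (hCFL1 : L ≤ α)
    (hCFL2 : lam ≤ (1 / 3) * min (1 / α) (1 / (2 * L + C * Δx)))
    (xi : ℤ → ℝ) (hxi : ∀ j, xi (j + 1) = xi j + Δx)
    (R : ℤ → ℝ)
    (F : ℤ → ℝ → ℝ → ℝ)
    (hF : ∀ j u v,
      F j u v = (f tn (xi j) u (R j) + f tn (xi j) v (R j) - α * (v - u)) / 2)
    (ρn ρn1 : ℤ → ℝ)
    (hpos : ∀ j ∈ Finset.Icc (0 : ℤ) ((N : ℤ) + 1), 0 ≤ ρn j)
    (hscheme : ∀ j ∈ Finset.Icc (1 : ℤ) (N : ℤ),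
      ρn1 j = ρn j - lam * (F j (ρn j) (ρn (j + 1)) - F (j - 1) (ρn (j - 1)) (ρn j))) :
    ∀ j ∈ Finset.Icc (1 : ℤ) (N : ℤ), 0 ≤ ρn1 j := by
  -- basic facts
  have hlip : ∀ t x ρ Rv, |f t x ρ Rv| ≤ L * |ρ| := by
    intro t x ρ Rv
    have := Convex.norm_image_sub_le_of_norm_deriv_le (s := (Set.univ : Set ℝ))
      (f := fun ρ => f t x ρ Rv)
      (fun y _ => (hfρ t x Rv) y) (fun y _ => hfρL t x y Rv)
      convex_univ (Set.mem_univ 0) (Set.mem_univ ρ)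
    simpa [hf0] using this
  have hL0 : 0 ≤ L := le_trans (abs_nonneg _) (hfρL 0 0 0 0)
  have hlam0 : 0 < lam := by rw [hlam]; positivity
  have hα0 : 0 < α := by
    by_contra h
    push_neg at h
    have h1 : 1 / α ≤ 0 := by
      rcases lt_or_eq_of_le h with h | h
      · exact le_of_lt (div_neg_of_pos_of_neg one_pos h)
      · simp [h]
    have : lam ≤ 0 := by
      have := min_le_left (1 / α) (1 / (2 * L + C * Δx))
      nlinarith [hCFL2]
    linarith
  have hlamα : lam * α ≤ 1 / 3 := by
    have h1 : lam ≤ (1 / 3) * (1 / α) := by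
      have := min_le_left (1 / α) (1 / (2 * L + C * Δx))
      nlinarith [hCFL2]
    have := mul_le_mul_of_nonneg_right h1 hα0.le
    calc lam * α ≤ (1 / 3) * (1 / α) * α := this
      _ = 1 / 3 := by field_simp
  intro j hj
  simp only [Finset.mem_Icc] at hj
  have hmem : ∀ k : ℤ, 0 ≤ k → k ≤ (N : ℤ) + 1 → 0 ≤ ρn k := fun k h1 h2 =>
    hpos k (Finset.mem_Icc.mpr ⟨h1, h2⟩)
  have ha : 0 ≤ ρn (j - 1) := hmem _ (by omega) (by omega)
  have hb : 0 ≤ ρn j := hmem _ (by omega) (by omega)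
  have hc : 0 ≤ ρn (j + 1) := hmem _ (by omega) (by omega)
  rw [hscheme j (Finset.mem_Icc.mpr hj), hF, hF]
  set a := ρn (j - 1)
  set b := ρn j
  set c := ρn (j + 1)
  set F1 := f tn (xi j) b (R j) with hF1
  set F2 := f tn (xi j) c (R j) with hF2
  set F3 := f tn (xi (j - 1)) a (R (j - 1)) with hF3
  set F4 := f tn (xi (j - 1)) b (R (j - 1)) with hF4
  have b1 : |F1| ≤ L * b := by simpa [abs_of_nonneg hb] using hlip tn (xi j) b (R j)
  have b2 : |F2| ≤ L * c := by simpa [abs_of_nonneg hc] using hlip tn (xi j) c (R j)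
  have b3 : |F3| ≤ L * a := by simpa [abs_of_nonneg ha] using hlip tn (xi (j - 1)) a (R (j - 1))
  have b4 : |F4| ≤ L * b := by simpa [abs_of_nonneg hb] using hlip tn (xi (j - 1)) b (R (j - 1))
  rw [abs_le] at b1 b2 b3 b4
  have hLα : lam * L ≤ lam * α := by nlinarith
  nlinarith [mul_nonneg hlam0.le ha, mul_nonneg hlam0.le hb, mul_nonneg hlam0.le hc,
    mul_le_mul_of_nonneg_left b2.2 hlam0.le, mul_le_mul_of_nonneg_left b3.1 hlam0.le,
    mul_le_mul_of_nonneg_left b1.2 hlam0.le, mul_le_mul_of_nonneg_left b4.1 hlam0.le,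
    mul_nonneg (mul_nonneg hlam0.le hα0.le) ha, mul_nonneg (mul_nonneg hlam0.le hα0.le) hc,
    mul_le_mul_of_nonneg_right hlamα hb, mul_le_mul_of_nonneg_right hLα hb,
    mul_le_mul_of_nonneg_right hLα ha, mul_le_mul_of_nonneg_right hLα hc]
end

section
/- Under the same CFL hypotheses and nonnegativity of all data, one step of the adapted Lax–Friedrichs scheme satisfies the discrete L¹ bound Δx ∑_{j=1}^N ρ^{n+1}_j ≤ Δx ∑_{j=1}^N ρ^n_j + α Δt (ρ^n_a + ρ^n_b), where ρ^n_a = ρ^n_0 and ρ^n_b = ρ^n_{N+1} are the boundary values. -/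
/-!
Summing the conservative scheme over the interior cells telescopes the fluxes, so only the two
boundary fluxes `F_{1/2}` and `F_{N+1/2}` survive. Since `f(·, 0, ·) = 0` and `|∂_ρ f| ≤ L ≤ α`,
we have `|f(u)| ≤ α u` for `u ≥ 0`, and the numerical viscosity `α (v - u) / 2` then gives
`F_{1/2} ≤ α ρ_0` and `-F_{N+1/2} ≤ α ρ_{N+1}`.
-/

open Finset

noncomputable def laxFriedrichsFlux (φ : ℝ → ℝ) (α u v : ℝ) : ℝ :=
  (φ u + φ v - α * (v - u)) / 2

lemma laxFriedrichsFlux_le {φ : ℝ → ℝ} {α u v : ℝ} (hu : φ u ≤ α * u) (hv : φ v ≤ α * v) :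
    laxFriedrichsFlux φ α u v ≤ α * u := by
  unfold laxFriedrichsFlux
  linarith

lemma neg_laxFriedrichsFlux_le {φ : ℝ → ℝ} {α u v : ℝ} (hu : -(α * u) ≤ φ u)
    (hv : -(α * v) ≤ φ v) :
    -laxFriedrichsFlux φ α u v ≤ α * v := by
  unfold laxFriedrichsFlux
  linarith

lemma abs_le_mul_abs_of_abs_deriv_le {φ : ℝ → ℝ} {L : ℝ} (hφ : Differentiable ℝ φ)
    (h0 : φ 0 = 0) (hL : ∀ x, |deriv φ x| ≤ L) (u : ℝ) : |φ u| ≤ L * |u| := by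
  simpa [h0] using Convex.norm_image_sub_le_of_norm_deriv_le (fun x _ => hφ x)
    (fun x _ => hL x) convex_univ (Set.mem_univ 0) (Set.mem_univ u)

lemma Int.sum_Icc_one_sub_sub_one {M : Type*} [AddCommGroup M] (G : ℤ → M) (N : ℕ) :
    ∑ j ∈ Icc (1 : ℤ) N, (G j - G (j - 1)) = G N - G 0 := by
  induction N with
  | zero => simp
  | succ n ih =>
    rw [Nat.cast_succ, ← insert_Icc_right_eq_Icc_add_one (by omega),
      sum_insert (by simp), ih, add_sub_cancel_right, sub_add_sub_cancel]

lemma sum_Icc_eq_sub_of_conservative {K : Type*} [Ring K] {ρ ρ' G : ℤ → K} {lam : K} {N : ℕ}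
    (h : ∀ j ∈ Icc (1 : ℤ) N, ρ' j = ρ j - lam * (G j - G (j - 1))) :
    ∑ j ∈ Icc (1 : ℤ) N, ρ' j = ∑ j ∈ Icc (1 : ℤ) N, ρ j - lam * (G N - G 0) := by
  rw [sum_congr rfl h, sum_sub_distrib, ← mul_sum, Int.sum_Icc_one_sub_sub_one]

theorem stmt9_general
    (L α lam Δx Δt tn : ℝ) (N : ℕ)
    (hΔx : 0 < Δx) (hΔt : 0 < Δt) (hlam : lam = Δt / Δx)
    (f : ℝ → ℝ → ℝ → ℝ → ℝ)
    (hf0 : ∀ t x R, f t x 0 R = 0)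
    (hfρ : ∀ t x R, Differentiable ℝ (fun ρ => f t x ρ R))
    (hfρL : ∀ t x ρ R, |deriv (fun ρ => f t x ρ R) ρ| ≤ L)
    (hCFL1 : L ≤ α)
    (xi : ℤ → ℝ)
    (R : ℤ → ℝ)
    (F : ℤ → ℝ → ℝ → ℝ)
    (hF : ∀ j u v,
      F j u v = (f tn (xi j) u (R j) + f tn (xi j) v (R j) - α * (v - u)) / 2)
    (ρn ρn1 : ℤ → ℝ)
    (hpos : ∀ j ∈ Finset.Icc (0 : ℤ) ((N : ℤ) + 1), 0 ≤ ρn j)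
    (hscheme : ∀ j ∈ Finset.Icc (1 : ℤ) (N : ℤ),
      ρn1 j = ρn j - lam * (F j (ρn j) (ρn (j + 1)) - F (j - 1) (ρn (j - 1)) (ρn j))) :
    Δx * ∑ j ∈ Finset.Icc (1 : ℤ) (N : ℤ), ρn1 j ≤
      Δx * ∑ j ∈ Finset.Icc (1 : ℤ) (N : ℤ), ρn j
        + α * Δt * (ρn 0 + ρn ((N : ℤ) + 1)) := by
  set G : ℤ → ℝ := fun j => F j (ρn j) (ρn (j + 1))
  have hG : ∀ j, G j = laxFriedrichsFlux (fun w => f tn (xi j) w (R j)) α (ρn j) (ρn (j + 1)) :=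
    fun j => hF _ _ _
  have hflux : ∀ j, ∀ k ∈ Icc (0 : ℤ) (N + 1), |f tn (xi j) (ρn k) (R j)| ≤ α * ρn k := by
    intro j k hk
    have hρ := hpos k hk
    calc |f tn (xi j) (ρn k) (R j)| ≤ L * |ρn k| :=
          abs_le_mul_abs_of_abs_deriv_le (hfρ _ _ _) (hf0 _ _ _) (hfρL _ _ · _) _
      _ ≤ α * ρn k := by rw [abs_of_nonneg hρ]; exact mul_le_mul_of_nonneg_right hCFL1 hρ
  have hmem : ∀ k : ℤ, 0 ≤ k → k ≤ N + 1 → k ∈ Icc (0 : ℤ) (N + 1) :=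
    fun k h₀ h₁ => mem_Icc.2 ⟨h₀, h₁⟩
  have hleft : G 0 ≤ α * ρn 0 := hG 0 ▸ laxFriedrichsFlux_le
    (abs_le.1 (hflux 0 0 (hmem 0 le_rfl (by omega)))).2
    (abs_le.1 (hflux 0 (0 + 1) (hmem _ (by omega) (by omega)))).2
  have hright : -G N ≤ α * ρn (N + 1) := hG N ▸ neg_laxFriedrichsFlux_le
    (abs_le.1 (hflux N N (hmem _ (by omega) (by omega)))).1
    (abs_le.1 (hflux N (N + 1) (hmem _ (by omega) le_rfl))).1
  have hsum : ∑ j ∈ Icc (1 : ℤ) N, ρn1 j = ∑ j ∈ Icc (1 : ℤ) N, ρn j - lam * (G N - G 0) :=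
    sum_Icc_eq_sub_of_conservative fun j hj => by simp only [hscheme j hj, G, sub_add_cancel]
  have hΔ : Δx * lam = Δt := by rw [hlam]; field_simp
  rw [hsum, mul_sub, ← mul_assoc, hΔ]
  linarith [mul_le_mul_of_nonneg_left hleft hΔt.le, mul_le_mul_of_nonneg_left hright hΔt.le]

theorem stmt9
    (L C α lam Δx Δt tn : ℝ) (N : ℕ)
    (hΔx : 0 < Δx) (hΔt : 0 < Δt) (hlam : lam = Δt / Δx)
    (f : ℝ → ℝ → ℝ → ℝ → ℝ)
    (hf0 : ∀ t x R, f t x 0 R = 0)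
    (hfρ : ∀ t x R, Differentiable ℝ (fun ρ => f t x ρ R))
    (hfρL : ∀ t x ρ R, |deriv (fun ρ => f t x ρ R) ρ| ≤ L)
    (hCFL1 : L ≤ α) (hCFL2 : lam * α ≤ 1 / 3)
    (xi : ℤ → ℝ) (hxi : ∀ j, xi (j + 1) = xi j + Δx)
    (R : ℤ → ℝ)
    (F : ℤ → ℝ → ℝ → ℝ)
    (hF : ∀ j u v,
      F j u v = (f tn (xi j) u (R j) + f tn (xi j) v (R j) - α * (v - u)) / 2)
    (ρn ρn1 : ℤ → ℝ)
    (hpos : ∀ j ∈ Finset.Icc (0 : ℤ) ((N : ℤ) + 1), 0 ≤ ρn j)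
    (hscheme : ∀ j ∈ Finset.Icc (1 : ℤ) (N : ℤ),
      ρn1 j = ρn j - lam * (F j (ρn j) (ρn (j + 1)) - F (j - 1) (ρn (j - 1)) (ρn j)))
    (hpos1 : ∀ j ∈ Finset.Icc (1 : ℤ) (N : ℤ), 0 ≤ ρn1 j) :
    Δx * ∑ j ∈ Finset.Icc (1 : ℤ) (N : ℤ), ρn1 j ≤
      Δx * ∑ j ∈ Finset.Icc (1 : ℤ) (N : ℤ), ρn j
        + α * Δt * (ρn 0 + ρn ((N : ℤ) + 1)) :=
  stmt9_general L α lam Δx Δt tn N hΔx hΔt hlam f hf0 hfρ hfρL hCFL1 xi R F hF ρn ρn1 hpos hscheme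
end

section
/- Under the CFL condition and with the frozen-flux variation bound |F^n_{j+1/2}(ρ,ρ) − F^n_{j−1/2}(ρ,ρ)| ≤ C Δx |ρ|(1 + ℒ C₁) for all ρ, one time step of the scheme satisfies the discrete L∞ bound max_{1 ≤ j ≤ N} ρ^{n+1}_j ≤ e^{C(1+ℒC₁)Δt} max{ max_{1 ≤ j ≤ N} ρ^n_j, ρ^n_a, ρ^n_b } for nonnegative data. -/
theorem stmt13
    (C LL C₁ Δx Δt lam M : ℝ) (N : ℕ)
    (hΔx : 0 < Δx) (hΔt : 0 < Δt) (hlam : lam = Δt / Δx)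
    (hC : 0 ≤ C) (hLL : 0 ≤ LL) (hC₁ : 0 ≤ C₁)
    (ρn ρn1 ΔF β γ : ℤ → ℝ)
    (hβ : ∀ j, β j ∈ Set.Icc (0 : ℝ) (1 / 3))
    (hγ : ∀ j, γ j ∈ Set.Icc (0 : ℝ) (1 / 3))
    (hpos : ∀ j ∈ Finset.Icc (0 : ℤ) ((N : ℤ) + 1), 0 ≤ ρn j)
    (hΔF : ∀ j ∈ Finset.Icc (1 : ℤ) (N : ℤ),
      |ΔF j| ≤ C * Δx * |ρn j| * (1 + LL * C₁))
    (hscheme : ∀ j ∈ Finset.Icc (1 : ℤ) (N : ℤ),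
      ρn1 j = (1 - β j - γ j) * ρn j + β j * ρn (j - 1) + γ j * ρn (j + 1)
        - lam * ΔF j)
    (hM : ∀ j ∈ Finset.Icc (0 : ℤ) ((N : ℤ) + 1), ρn j ≤ M) :
    ∀ j ∈ Finset.Icc (1 : ℤ) (N : ℤ),
      ρn1 j ≤ Real.exp (C * (1 + LL * C₁) * Δt) * M := by
  intro j hj
  simp only [Finset.mem_Icc] at hj
  obtain ⟨hj1, hjN⟩ := hj
  have hmem : ∀ k : ℤ, j - 1 ≤ k → k ≤ j + 1 → k ∈ Finset.Icc (0 : ℤ) ((N : ℤ) + 1) := by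
    intro k h1 h2
    simp only [Finset.mem_Icc]
    omega
  have hjmem : j ∈ Finset.Icc (1 : ℤ) (N : ℤ) := by simp [Finset.mem_Icc]; omega
  have hρj := hpos j (hmem j (by omega) (by omega))
  have hMj := hM j (hmem j (by omega) (by omega))
  have hMm := hM (j - 1) (hmem _ (by omega) (by omega))
  have hMp := hM (j + 1) (hmem _ (by omega) (by omega))
  have hM0 : 0 ≤ M := le_trans hρj hMj
  obtain ⟨hβ0, hβ1⟩ := hβ j
  obtain ⟨hγ0, hγ1⟩ := hγ j
  have hK : (0:ℝ) ≤ 1 + LL * C₁ := by positivity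
  have hF := hΔF j hjmem
  rw [abs_of_nonneg hρj] at hF
  have hlam0 : 0 ≤ lam := by rw [hlam]; positivity
  have hflux : lam * ΔF j ≥ -(C * (1 + LL * C₁) * Δt * M) := by
    have h1 : lam * ΔF j ≥ -(lam * |ΔF j|) := by
      have := neg_abs_le (ΔF j)
      nlinarith [abs_nonneg (ΔF j)]
    have h2 : lam * |ΔF j| ≤ lam * (C * Δx * ρn j * (1 + LL * C₁)) :=
      mul_le_mul_of_nonneg_left hF hlam0
    have h3 : lam * (C * Δx * ρn j * (1 + LL * C₁)) = C * (1 + LL * C₁) * Δt * ρn j := by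
      rw [hlam]; field_simp
    have h4 : C * (1 + LL * C₁) * Δt * ρn j ≤ C * (1 + LL * C₁) * Δt * M := by
      apply mul_le_mul_of_nonneg_left hMj; positivity
    linarith
  have hconv : (1 - β j - γ j) * ρn j + β j * ρn (j - 1) + γ j * ρn (j + 1) ≤ M := by
    have h1 : (1 - β j - γ j) * ρn j ≤ (1 - β j - γ j) * M :=
      mul_le_mul_of_nonneg_left hMj (by linarith)
    have h2 : β j * ρn (j - 1) ≤ β j * M := mul_le_mul_of_nonneg_left hMm hβ0
    have h3 : γ j * ρn (j + 1) ≤ γ j * M := mul_le_mul_of_nonneg_left hMp hγ0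
    nlinarith
  have hstep : ρn1 j ≤ (1 + C * (1 + LL * C₁) * Δt) * M := by
    rw [hscheme j hjmem]; nlinarith
  have hexp : 1 + C * (1 + LL * C₁) * Δt ≤ Real.exp (C * (1 + LL * C₁) * Δt) := by
    have := Real.add_one_le_exp (C * (1 + LL * C₁) * Δt); linarith
  calc ρn1 j ≤ (1 + C * (1 + LL * C₁) * Δt) * M := hstep
    _ ≤ Real.exp (C * (1 + LL * C₁) * Δt) * M := mul_le_mul_of_nonneg_right hexp hM0
end

section
/- The discrete difference of reciprocal weight products satisfies 1/(W_{j+3/2} W_{j+1/2}) − 1/(W_{j+1/2} W_{j−1/2}) ≤ 2 Δx ‖ω′‖_{L¹} / (W_{j+3/2} W_{j+1/2} W_{j−1/2}), where W_{j+1/2} = Δx ∑_{β=1}^N ω((β−j−1/2)Δx) are the discrete kernel weights (assumed positive). -/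
open MeasureTheory Set Function

/-
W_{j-1/2} - W_{j+3/2} is Δx times a sum of increments ω(y + 2Δx) - ω(y) over the grid points y.
Each increment is bounded by the integral of |ω'| over the two adjacent cells [y, y + Δx] and
[y + Δx, y + 2Δx]; the cells of each of the two families are pairwise disjoint, so the sum is at most
2‖ω'‖_{L¹}. Dividing by the three (positive) weights gives the estimate, since
1/(W₊W) - 1/(WW₋) = (W₋ - W₊)/(W₊WW₋).
-/

lemma sum_setIntegral_Ioc_le_integral {μ : Measure ℝ} {g : ℝ → ℝ} (hg : Integrable g μ)
    (hg0 : 0 ≤ g) (a d : ℝ) (s : Finset ℤ) :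
    ∑ n ∈ s, ∫ x in Ioc (a + n * d) (a + (n + 1) * d), g x ∂μ ≤ ∫ x, g x ∂μ := by
  have hdisj : Pairwise (Disjoint on fun n : ℤ => Ioc (a + n * d) (a + (n + 1) * d)) := by
    simpa only [zsmul_eq_mul, Int.cast_add, Int.cast_one] using
      pairwise_disjoint_Ioc_add_zsmul a d
  rw [← integral_biUnion_finset s (fun _ _ => measurableSet_Ioc) (hdisj.set_pairwise _)
    (fun _ _ => hg.integrableOn)]
  exact setIntegral_le_integral hg (Filter.Eventually.of_forall hg0)

lemma sub_le_setIntegral_Ioc_abs_deriv {f : ℝ → ℝ} {a b : ℝ} (hab : a ≤ b)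
    (hf : ∀ x ∈ uIcc a b, DifferentiableAt ℝ f x) (hf' : IntervalIntegrable (deriv f) volume a b) :
    f b - f a ≤ ∫ x in Ioc a b, |deriv f x| := by
  calc f b - f a = ∫ x in a..b, deriv f x := (intervalIntegral.integral_deriv_eq_sub hf hf').symm
    _ ≤ ∫ x in a..b, |deriv f x| :=
      intervalIntegral.integral_mono_on hab hf' hf'.abs fun x _ => le_abs_self _
    _ = ∫ x in Ioc a b, |deriv f x| := intervalIntegral.integral_of_le hab

lemma sum_sub_add_two_mul_le {f : ℝ → ℝ} (hf : Differentiable ℝ f) (hf' : Integrable (deriv f))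
    {d : ℝ} (hd : 0 ≤ d) (a : ℝ) (s : Finset ℤ) :
    ∑ n ∈ s, (f (a + (n + 2) * d) - f (a + n * d)) ≤ 2 * ∫ x, |deriv f x| := by
  have cell {y z : ℝ} (hyz : y + d = z) : f z - f y ≤ ∫ x in Ioc y z, |deriv f x| :=
    sub_le_setIntegral_Ioc_abs_deriv (by linarith) (fun x _ => hf x) hf'.intervalIntegrable
  have split (n : ℤ) : f (a + (n + 2) * d) - f (a + n * d) ≤
      (∫ x in Ioc (a + n * d) (a + (n + 1) * d), |deriv f x|) +
        ∫ x in Ioc (a + d + n * d) (a + d + (n + 1) * d), |deriv f x| := by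
    rw [show a + (n + 2) * d = a + d + (n + 1) * d by ring,
      show a + d + n * d = a + (n + 1) * d by ring]
    linarith [cell (y := a + n * d) (z := a + (n + 1) * d) (by ring),
      cell (y := a + (n + 1) * d) (z := a + d + (n + 1) * d) (by ring)]
  have habs : Integrable (fun x => |deriv f x|) := hf'.abs
  have hnonneg : (0 : ℝ → ℝ) ≤ fun x => |deriv f x| := fun x => abs_nonneg _
  calc ∑ n ∈ s, (f (a + (n + 2) * d) - f (a + n * d))
      ≤ ∑ n ∈ s, ((∫ x in Ioc (a + n * d) (a + (n + 1) * d), |deriv f x|) +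
          ∫ x in Ioc (a + d + n * d) (a + d + (n + 1) * d), |deriv f x|) :=
        Finset.sum_le_sum fun n _ => split n
    _ ≤ 2 * ∫ x, |deriv f x| := by
        rw [Finset.sum_add_distrib]
        linarith [sum_setIntegral_Ioc_le_integral habs hnonneg a d s,
          sum_setIntegral_Ioc_le_integral habs hnonneg (a + d) d s]

lemma one_div_mul_sub_one_div_mul {a b c : ℝ} (ha : a ≠ 0) (hb : b ≠ 0) (hc : c ≠ 0) :
    1 / (a * b) - 1 / (b * c) = (c - a) / (a * b * c) := by
  field_simp

theorem stmt19
    (Δx : ℝ) (hΔx : 0 < Δx) (N : ℕ)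
    (ω : ℝ → ℝ) (hω : ContDiff ℝ 1 ω)
    (hω'int : Integrable (deriv ω))
    (W : ℤ → ℝ)
    (hW : ∀ j, W j = Δx * ∑ β ∈ Finset.Icc (1 : ℤ) (N : ℤ),
        ω (((β : ℝ) - (j : ℝ) - 1 / 2) * Δx))
    (j : ℤ)
    (hWpos : ∀ i ∈ ({j - 1, j, j + 1} : Set ℤ), 0 < W i) :
    1 / (W (j + 1) * W j) - 1 / (W j * W (j - 1)) ≤
      2 * Δx * (∫ y, |deriv ω y|) / (W (j + 1) * W j * W (j - 1)) := by
  have hnext : 0 < W (j + 1) := hWpos _ (by simp)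
  have hmid : 0 < W j := hWpos _ (by simp)
  have hprev : 0 < W (j - 1) := hWpos _ (by simp)
  have hdiff : W (j - 1) - W (j + 1) ≤ 2 * Δx * ∫ y, |deriv ω y| := by
    have hsum := sum_sub_add_two_mul_le (hω.differentiable one_ne_zero) hω'int hΔx.le
      (-(j + 3 / 2) * Δx) (Finset.Icc 1 (N : ℤ))
    have hrepr : W (j - 1) - W (j + 1) = Δx * ∑ β ∈ Finset.Icc 1 (N : ℤ),
        (ω (-(j + 3 / 2) * Δx + (β + 2) * Δx) - ω (-(j + 3 / 2) * Δx + β * Δx)) := by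
      rw [hW, hW, ← mul_sub, ← Finset.sum_sub_distrib]
      congr 1
      refine Finset.sum_congr rfl fun β _ => ?_
      push_cast
      ring_nf
    rw [hrepr, mul_comm 2 Δx, mul_assoc]
    exact mul_le_mul_of_nonneg_left hsum hΔx.le
  rw [one_div_mul_sub_one_div_mul hnext.ne' hmid.ne' hprev.ne']
  exact div_le_div_of_nonneg_right hdiff (by positivity)
end
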